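/- The series H(x) = Σ_{n≥0} (-x)^n q^{C(n,2)} / ((q;q)_n (x;q)_n) satisfies the second-order linear q-difference equation (1-x)H(x) - (1-2x)H(xq) + (x²q/(1-xq))·H(xq²) = 0. -/

import Mathlib

open PowerSeries

noncomputable section
namespace FC

/-- The field `ℚ(q)` of rational functions in `q`. -/
abbrev K : Type := RatFunc ℚ

/-- The variable `q`. -/
def q : K := RatFunc.X

/-- The q-Pochhammer symbol `(a; q)_n = ∏_{i=0}^{n-1} (1 - a q^i)`. -/
def poch (a : K) (n : ℕ) : K := ∏ i ∈ Finset.range n, (1 - a * q ^ i)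

/-- The power series `(x q^s; q)_n = ∏_{i=0}^{n-1} (1 - q^{s+i} x)` in the variable `x`. -/
def pochX (s n : ℕ) : PowerSeries K :=
  ∏ i ∈ Finset.range n, (1 - PowerSeries.C (q ^ (s + i)) * PowerSeries.X)

/-- `J(x) = Σ_{n≥0} (-x)^n q^{C(n,2)} / ((q;q)_n (xq;q)_n)`, defined coefficientwise:
the coefficient of `x^N` is `Σ_{n=0}^{N} (-1)^n q^{C(n,2)}/(q;q)_n · [x^{N-n}] (xq;q)_n⁻¹`. -/
def J : PowerSeries K :=
  PowerSeries.mk fun N => ∑ n ∈ Finset.range (N + 1),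
    ((-1 : K) ^ n * q ^ n.choose 2 / poch q n) * PowerSeries.coeff (N - n) (pochX 1 n)⁻¹

/-- `H(x) = Σ_{n≥0} (-x)^n q^{C(n,2)} / ((q;q)_n (x;q)_n)`. -/
def H : PowerSeries K :=
  PowerSeries.mk fun N => ∑ n ∈ Finset.range (N + 1),
    ((-1 : K) ^ n * q ^ n.choose 2 / poch q n) * PowerSeries.coeff (N - n) (pochX 0 n)⁻¹

/-- `K(x) = Σ_{n≥0} (x^n q^{n(n+1)/2} / (xq;q)_n) · Σ_{k=0}^n (-1)^k/(q;q)_k`. -/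
def Kq : PowerSeries K :=
  PowerSeries.mk fun N => ∑ n ∈ Finset.range (N + 1),
    (q ^ (n * (n + 1) / 2) * ∑ k ∈ Finset.range (n + 1), (-1 : K) ^ k / poch q k) *
      PowerSeries.coeff (N - n) (pochX 1 n)⁻¹

end FC

/-! Write `H = Σ T_n` with `T_n(x) = c_n x^n / (x;q)_n` and `c_n = (-1)^n q^{C(n,2)} / (q;q)_n`.
Each `T_n` satisfies the equation up to a telescoping error: over the common denominator
`(x;q)_{n+2}`, the recurrence `c_{n+1} (1 - q^{n+1}) = -c_n q^n` turns the left-hand side for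
`T_n` into `D_n - D_{n+1}`, where `D_n = c_n (1 - q^n) x^n / (xq;q)_n`. Since `D_0 = 0` and
`x^n ∣ D_n`, these errors sum to zero. -/

namespace PowerSeries

section FormalSum

variable {R : Type*} [CommRing R]

/-- The sum of a family in which `X ^ n ∣ A n`; for other families the value is meaningless. -/
def hsum (A : ℕ → R⟦X⟧) : R⟦X⟧ :=
  mk fun N => ∑ n ∈ Finset.range (N + 1), coeff N (A n)

theorem coeff_hsum (A : ℕ → R⟦X⟧) (N : ℕ) :
    coeff N (hsum A) = ∑ n ∈ Finset.range (N + 1), coeff N (A n) :=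
  coeff_mk _ _

theorem eq_zero_of_forall_X_pow_dvd {f : R⟦X⟧} (h : ∀ M, X ^ M ∣ f) : f = 0 := by
  ext N
  exact X_pow_dvd_iff.mp (h (N + 1)) N N.lt_succ_self

theorem X_pow_dvd_hsum_sub_sum {A : ℕ → R⟦X⟧} (hA : ∀ n, X ^ n ∣ A n) (M : ℕ) :
    X ^ M ∣ hsum A - ∑ n ∈ Finset.range M, A n := by
  refine X_pow_dvd_iff.mpr fun N hN => ?_
  rw [map_sub, coeff_hsum, map_sum, sub_eq_zero]
  refine Finset.sum_subset (fun n hn => ?_) fun n _ hn => ?_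
  · simp only [Finset.mem_range] at hn ⊢
    omega
  · simp only [Finset.mem_range, not_lt] at hn
    exact X_pow_dvd_iff.mp (hA n) N hn

theorem hsum_add (A B : ℕ → R⟦X⟧) : hsum (fun n => A n + B n) = hsum A + hsum B := by
  ext N
  simp only [coeff_hsum, map_add, Finset.sum_add_distrib]

theorem hsum_sub (A B : ℕ → R⟦X⟧) : hsum (fun n => A n - B n) = hsum A - hsum B := by
  ext N
  simp only [coeff_hsum, map_sub, Finset.sum_sub_distrib]

theorem rescale_hsum (a : R) (A : ℕ → R⟦X⟧) :
    rescale a (hsum A) = hsum fun n => rescale a (A n) := by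
  ext N
  simp only [coeff_rescale, coeff_hsum, Finset.mul_sum]

theorem mul_hsum (f : R⟦X⟧) {A : ℕ → R⟦X⟧} (hA : ∀ n, X ^ n ∣ A n) :
    f * hsum A = hsum fun n => f * A n := by
  rw [← sub_eq_zero]
  refine eq_zero_of_forall_X_pow_dvd fun M => ?_
  have hfA := X_pow_dvd_hsum_sub_sum (fun n => dvd_mul_of_dvd_right (hA n) f) M
  have h := dvd_mul_of_dvd_right (X_pow_dvd_hsum_sub_sum hA M) f
  rw [mul_sub, Finset.mul_sum] at h
  simpa using dvd_sub h hfA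

theorem hsum_sub_succ_eq_zero {D : ℕ → R⟦X⟧} (h0 : D 0 = 0) (hD : ∀ n, X ^ n ∣ D n) :
    hsum (fun n => D n - D (n + 1)) = 0 := by
  refine eq_zero_of_forall_X_pow_dvd fun M => ?_
  have h := X_pow_dvd_hsum_sub_sum (A := fun n => D n - D (n + 1))
    (fun n => dvd_sub (hD n) ((pow_dvd_pow X n.le_succ).trans (hD (n + 1)))) M
  rw [Finset.sum_range_sub', h0, zero_sub, sub_neg_eq_add] at h
  simpa using dvd_sub h (hD M)

theorem X_pow_dvd_rescale {n : ℕ} {f : R⟦X⟧} (a : R) (h : X ^ n ∣ f) :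
    X ^ n ∣ rescale a f := by
  refine X_pow_dvd_iff.mpr fun m hm => ?_
  rw [coeff_rescale, X_pow_dvd_iff.mp h m hm, mul_zero]

theorem rescale_C (a r : R) : rescale a (C r) = C r := by
  ext n
  rw [coeff_rescale, coeff_C]
  split_ifs with h <;> simp [h]

end FormalSum

section Field

variable {k : Type*} [Field k]

theorem rescale_inv (a : k) {f : k⟦X⟧} (hf : constantCoeff f ≠ 0) :
    rescale a f⁻¹ = (rescale a f)⁻¹ := by
  have hf' : constantCoeff (rescale a f) ≠ 0 := by
    rwa [← coeff_zero_eq_constantCoeff_apply, coeff_rescale, pow_zero, one_mul,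
      coeff_zero_eq_constantCoeff_apply]
  rw [eq_inv_iff_mul_eq_one hf', ← map_mul, PowerSeries.inv_mul_cancel f hf, map_one]

theorem inv_eq_mul_inv_of_mul_eq {f g h : k⟦X⟧} (hg : constantCoeff g ≠ 0) (hfg : f * g = h) :
    f⁻¹ = g * h⁻¹ := by
  rw [← hfg, PowerSeries.mul_inv_rev, ← mul_assoc, PowerSeries.mul_inv_cancel g hg, one_mul]

end Field

end PowerSeries

namespace FC

theorem one_sub_q_pow_ne_zero {i : ℕ} (hi : i ≠ 0) : 1 - q ^ i ≠ 0 := by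
  have hp : (1 - Polynomial.X ^ i : Polynomial ℚ) ≠ 0 := fun h => by
    simpa [hi.symm] using congrArg (Polynomial.coeff · 0) h
  simpa [q] using RatFunc.algebraMap_ne_zero hp

theorem poch_q_succ (n : ℕ) : poch q (n + 1) = poch q n * (1 - q ^ (n + 1)) := by
  rw [poch, Finset.prod_range_succ, ← poch, ← pow_succ']

def termCoeff (n : ℕ) : K := (-1 : K) ^ n * q ^ n.choose 2 / poch q n

theorem termCoeff_succ_mul (n : ℕ) :
    termCoeff (n + 1) * (1 - q ^ (n + 1)) = -(termCoeff n * q ^ n) := by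
  have hchoose : (n + 1).choose 2 = n + n.choose 2 := by
    rw [Nat.choose_succ_succ, Nat.choose_one_right]
  rw [termCoeff, termCoeff, poch_q_succ, hchoose, ← div_div,
    div_mul_cancel₀ _ (one_sub_q_pow_ne_zero n.succ_ne_zero)]
  ring

theorem pochX_succ (s n : ℕ) : pochX s (n + 1) = pochX s n * (1 - C (q ^ (s + n)) * X) :=
  Finset.prod_range_succ _ _

theorem pochX_succ' (s n : ℕ) : pochX s (n + 1) = (1 - C (q ^ s) * X) * pochX (s + 1) n := by
  simp only [pochX, Finset.prod_range_succ', add_zero, Nat.add_right_comm s, add_assoc, mul_comm]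

theorem constantCoeff_pochX (s n : ℕ) : constantCoeff (pochX s n) ≠ 0 := by
  simp [pochX, map_prod]

theorem rescale_pochX (k s n : ℕ) : rescale (q ^ k) (pochX s n) = pochX (s + k) n := by
  rw [pochX, map_prod, pochX]
  refine Finset.prod_congr rfl fun i _ => ?_
  rw [map_sub, map_one, map_mul, rescale_C, rescale_X, ← mul_assoc, ← map_mul, ← pow_add,
    Nat.add_right_comm s]

def hTerm (n : ℕ) : PowerSeries K := X ^ n * (C (termCoeff n) * (pochX 0 n)⁻¹)

def telescopingTerm (n : ℕ) : PowerSeries K :=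
  X ^ n * (C (termCoeff n * (1 - q ^ n)) * (pochX 1 n)⁻¹)

theorem H_eq_hsum : H = hsum hTerm := by
  ext N
  rw [H, coeff_mk, coeff_hsum]
  refine Finset.sum_congr rfl fun n hn => ?_
  rw [hTerm, coeff_X_pow_mul', if_pos (Nat.lt_succ_iff.mp (Finset.mem_range.mp hn)),
    coeff_C_mul, termCoeff]

theorem rescale_hTerm (k n : ℕ) :
    rescale (q ^ k) (hTerm n) = X ^ n * (C (termCoeff n * q ^ (k * n)) * (pochX k n)⁻¹) := by
  rw [hTerm, map_mul, map_mul, map_pow, rescale_X, rescale_C,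
    rescale_inv _ (constantCoeff_pochX 0 n), rescale_pochX, zero_add]
  simp only [map_mul, map_pow, pow_mul]
  ring

theorem hTerm_qDifference (n : ℕ) :
    (1 - X) * hTerm n - (1 - 2 * X) * rescale q (hTerm n)
      + X ^ 2 * C q * (1 - C q * X)⁻¹ * rescale (q ^ 2) (hTerm n)
      = telescopingTerm n - telescopingTerm (n + 1) := by
  set W := (pochX 0 (n + 2))⁻¹
  have hP0 : (pochX 0 n)⁻¹ = ((1 - C (q ^ n) * X) * (1 - C (q ^ (n + 1)) * X)) * W :=
    inv_eq_mul_inv_of_mul_eq (by simp) (by rw [pochX_succ 0 (n + 1), pochX_succ]; ring_nf)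
  have hP1 : (pochX 1 n)⁻¹ = ((1 - X) * (1 - C (q ^ (n + 1)) * X)) * W :=
    inv_eq_mul_inv_of_mul_eq (by simp)
      (by rw [pochX_succ' 0 (n + 1), pochX_succ 1 n]; simp only [pow_zero, map_one]; ring_nf)
  have hP1succ : (pochX 1 (n + 1))⁻¹ = (1 - X) * W :=
    inv_eq_mul_inv_of_mul_eq (by simp)
      (by rw [pochX_succ' 0 (n + 1)]; simp only [pow_zero, map_one]; ring)
  have hP2 : (1 - C q * X)⁻¹ * (pochX 2 n)⁻¹ = (1 - X) * W := by
    rw [← PowerSeries.mul_inv_rev, ← hP1succ, pochX_succ', pow_one, mul_comm]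
  have hq := rescale_hTerm 1 n
  rw [pow_one, one_mul] at hq
  rw [hq, rescale_hTerm, hTerm, telescopingTerm, telescopingTerm, termCoeff_succ_mul, hP0, hP1,
    hP1succ]
  simp only [map_mul, map_sub, map_one, map_pow, map_neg] at hP2 ⊢
  linear_combination (X ^ (n + 2) * C q * C (termCoeff n) * C q ^ (2 * n)) * hP2

/-- `(1-x)H(x) - (1-2x)H(xq) + (x²q/(1-xq))·H(xq²) = 0`. -/
theorem stmt3 :
    (1 - PowerSeries.X) * H - (1 - 2 * PowerSeries.X) * rescale q H
      + PowerSeries.X ^ 2 * PowerSeries.C q *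
          (1 - PowerSeries.C q * PowerSeries.X)⁻¹ * rescale (q ^ 2) H = 0 := by
  have hdvd (a : K) (n : ℕ) : X ^ n ∣ rescale a (hTerm n) :=
    X_pow_dvd_rescale a (dvd_mul_right _ _)
  rw [H_eq_hsum, rescale_hsum, rescale_hsum, mul_hsum (A := hTerm) _ fun n => dvd_mul_right _ _,
    mul_hsum _ (hdvd q), mul_hsum _ (hdvd (q ^ 2)), ← hsum_sub, ← hsum_add]
  simp only [hTerm_qDifference]
  exact hsum_sub_succ_eq_zero (by simp [telescopingTerm]) fun n => dvd_mul_right _ _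

end FC
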